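/- arXiv:2402.02458 — 2 statements merged into one kernel-verified Lean document; each statement's English description precedes it below -/
import Mathlib

section
/- Let G be a potted graph of order n whose cycle C_k has length k, and suppose the graph G − C_k obtained by deleting the vertices of the cycle has connected components T₁, …, T_r. Then for every x ∈ {1, …, r}: diss(G) = diss(T_x) + diss(G − T_x), every maximum dissociation set F of G satisfies that F ∩ V(T_x) is a maximum dissociation set of T_x and F \ V(T_x) is a maximum dissociation set of G − T_x, and consequently m(G) ≤ m(T_x) · m(G − T_x). -/
open scoped Classical

variable {V : Type*}

/-- The number of neighbors of `v` that lie inside the finite set `s`,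
i.e. the degree of `v` in the subgraph induced by `s` (when `v ∈ s`). -/
noncomputable def nbrCount (G : SimpleGraph V) (s : Finset V) (v : V) : ℕ :=
  {w ∈ (s : Set V) | G.Adj v w}.ncard

/-- `s` is a dissociation set of `G`: the subgraph induced by `s` has maximum degree at most 1. -/
def IsDissoc (G : SimpleGraph V) (s : Finset V) : Prop :=
  ∀ v ∈ s, nbrCount G s v ≤ 1

/-- The dissociation number of the subgraph of `G` induced by `A`. -/
noncomputable def dissNumOn (G : SimpleGraph V) (A : Set V) : ℕ :=
  sSup {n | ∃ s : Finset V, ↑s ⊆ A ∧ IsDissoc G s ∧ s.card = n}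

/-- `s` is a maximum dissociation set of the subgraph of `G` induced by `A`. -/
def IsMaxDissocOn (G : SimpleGraph V) (A : Set V) (s : Finset V) : Prop :=
  ↑s ⊆ A ∧ IsDissoc G s ∧ s.card = dissNumOn G A

/-- The number of maximum dissociation sets of the subgraph of `G` induced by `A`. -/
noncomputable def numMaxDissocOn (G : SimpleGraph V) (A : Set V) : ℕ :=
  Nat.card {s : Finset V // IsMaxDissocOn G A s}

/-- The dissociation number of `G`. -/
noncomputable def dissNum (G : SimpleGraph V) : ℕ :=
  dissNumOn G Set.univ

/-- `s` is a maximum dissociation set of `G`. -/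
def IsMaxDissoc (G : SimpleGraph V) (s : Finset V) : Prop :=
  IsMaxDissocOn G Set.univ s

/-- The number `m(G)` of maximum dissociation sets of `G`. -/
noncomputable def numMaxDissoc (G : SimpleGraph V) : ℕ :=
  numMaxDissocOn G Set.univ

/-- `m(G[A], u⁻)`: maximum dissociation sets of `G[A]` not containing `u`. -/
noncomputable def numMaxDissocOnAway (G : SimpleGraph V) (A : Set V) (u : V) : ℕ :=
  Nat.card {s : Finset V // IsMaxDissocOn G A s ∧ u ∉ s}

/-- `m(G[A], u⁰)`: maximum dissociation sets of `G[A]` containing `u` with induced degree 0. -/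
noncomputable def numMaxDissocOnDeg0 (G : SimpleGraph V) (A : Set V) (u : V) : ℕ :=
  Nat.card {s : Finset V // IsMaxDissocOn G A s ∧ u ∈ s ∧ nbrCount G s u = 0}

/-- `m(G[A], u¹)`: maximum dissociation sets of `G[A]` containing `u` with induced degree 1. -/
noncomputable def numMaxDissocOnDeg1 (G : SimpleGraph V) (A : Set V) (u : V) : ℕ :=
  Nat.card {s : Finset V // IsMaxDissocOn G A s ∧ u ∈ s ∧ nbrCount G s u = 1}

/-- `m(G, u⁻)`. -/
noncomputable def numMaxDissocAway (G : SimpleGraph V) (u : V) : ℕ :=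
  numMaxDissocOnAway G Set.univ u

/-- `m(G, u⁰)`. -/
noncomputable def numMaxDissocDeg0 (G : SimpleGraph V) (u : V) : ℕ :=
  numMaxDissocOnDeg0 G Set.univ u

/-- `m(G, u¹)`. -/
noncomputable def numMaxDissocDeg1 (G : SimpleGraph V) (u : V) : ℕ :=
  numMaxDissocOnDeg1 G Set.univ u

/-- `m̄`: relative count, `numMaxDissocOn G B` if `dissNumOn G B = dissNumOn G A`, else 0. -/
noncomputable def mbar (G : SimpleGraph V) (A B : Set V) : ℕ :=
  if dissNumOn G B = dissNumOn G A then numMaxDissocOn G B else 0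

/-- `G` is a potted graph whose (unique) cycle has length `k`: `G` is connected and unicyclic
(equivalently, connected with as many edges as vertices), and its cycle has length `k` and
contains a unique vertex of degree larger than 2. -/
def IsPotted (G : SimpleGraph V) (k : ℕ) : Prop :=
  G.Connected ∧ G.edgeSet.ncard = Nat.card V ∧
    ∃ (v : V) (c : G.Walk v v), c.IsCycle ∧ c.length = k ∧
      ∃! u, u ∈ c.support ∧ 2 < (G.neighborSet u).ncard

/-- `T` is the vertex set of a connected component of the subgraph of `G` induced by `A`:
it is a maximal connected subset of `A`. -/
def IsCompOf (G : SimpleGraph V) (A T : Set V) : Prop :=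
  T ⊆ A ∧ T.Nonempty ∧ (G.induce T).Connected ∧
    ∀ T' : Set V, T ⊆ T' → T' ⊆ A → (G.induce T').Connected → T' = T

section PottedHelpers
open SimpleGraph

variable {V : Type*}



lemma nbrSet_finite (G : SimpleGraph V) (s : Finset V) (v : V) :
    {w ∈ (s : Set V) | G.Adj v w}.Finite :=
  s.finite_toSet.subset (fun _ hw => hw.1)

lemma nbrCount_mono (G : SimpleGraph V) {s t : Finset V} (h : s ⊆ t) (v : V) :
    nbrCount G s v ≤ nbrCount G t v :=
  Set.ncard_le_ncard (fun w hw => ⟨h hw.1, hw.2⟩) (nbrSet_finite G t v)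

lemma isDissoc_subset (G : SimpleGraph V) {s t : Finset V} (h : s ⊆ t)
    (ht : IsDissoc G t) : IsDissoc G s :=
  fun v hv => le_trans (nbrCount_mono G h v) (ht v (h hv))

lemma two_le_nbrCount (G : SimpleGraph V) {s : Finset V} {v a b : V}
    (ha : a ∈ s) (hb : b ∈ s) (hab : a ≠ b) (hva : G.Adj v a) (hvb : G.Adj v b) :
    2 ≤ nbrCount G s v := by
  have h2 : ({a, b} : Set V) ⊆ {w ∈ (s : Set V) | G.Adj v w} := by
    rintro x (rfl | rfl) <;> exact ⟨by simpa, by assumption⟩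
  calc 2 = ({a, b} : Set V).ncard := (Set.ncard_pair hab).symm
    _ ≤ _ := Set.ncard_le_ncard h2 (nbrSet_finite G s v)

lemma ncard_le_one_of_subset_singleton {α : Type*} {s : Set α} {a : α} (h : s ⊆ {a}) :
    s.ncard ≤ 1 := by
  calc s.ncard ≤ ({a} : Set α).ncard :=
        Set.ncard_le_ncard h (Set.finite_singleton a)
    _ = 1 := Set.ncard_singleton a

variable [Fintype V]

lemma bddAbove_dissSet (G : SimpleGraph V) (A : Set V) :
    BddAbove {n | ∃ s : Finset V, ↑s ⊆ A ∧ IsDissoc G s ∧ s.card = n} := by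
  refine ⟨Fintype.card V, ?_⟩
  rintro n ⟨s, -, -, rfl⟩
  exact s.card_le_univ

lemma card_le_dissNumOn (G : SimpleGraph V) {A : Set V} {s : Finset V}
    (hsA : ↑s ⊆ A) (hd : IsDissoc G s) : s.card ≤ dissNumOn G A :=
  le_csSup (bddAbove_dissSet G A) ⟨s, hsA, hd, rfl⟩

lemma exists_maxDissocOn (G : SimpleGraph V) (A : Set V) :
    ∃ s : Finset V, IsMaxDissocOn G A s := by
  have hne : {n | ∃ s : Finset V, ↑s ⊆ A ∧ IsDissoc G s ∧ s.card = n}.Nonempty :=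
    ⟨0, ∅, by simp, by intro v hv; simp at hv, rfl⟩
  obtain ⟨s, h1, h2, h3⟩ := Nat.sSup_mem hne (bddAbove_dissSet G A)
  exact ⟨s, h1, h2, h3⟩

lemma walk_support_eq_map (G : SimpleGraph V) {u v : V} (p : G.Walk u v) :
    p.support = (List.range (p.length + 1)).map p.getVert := by
  induction p with
  | nil => rfl
  | cons h q ih =>
    rw [Walk.support_cons, Walk.length_cons, List.range_succ_eq_map]
    simp only [List.map_cons, Walk.getVert_zero, List.map_map]
    rw [ih]
    congr 1

lemma cycle_getVert_injOn (G : SimpleGraph V) {v0 : V} {c : G.Walk v0 v0}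
    (hc : c.IsCycle) :
    ∀ a b, a < c.length → b < c.length → c.getVert a = c.getVert b → a = b := by
  have h3 : 3 ≤ c.length := hc.three_le_length
  have htail : c.support.tail = (List.range c.length).map (fun i => c.getVert (i + 1)) := by
    rw [walk_support_eq_map, List.range_succ_eq_map]
    simp [List.map_map, Function.comp_def]
  have hnd : c.support.tail.Nodup := hc.support_nodup
  rw [htail, List.nodup_map_iff_inj_on List.nodup_range] at hnd
  have key : ∀ x, x < c.length →
      c.getVert x = c.getVert ((if x = 0 then c.length - 1 else x - 1) + 1) := by
    intro x hx
    rcases Nat.eq_zero_or_pos x with rfl | hx0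
    · rw [if_pos rfl, (by omega : c.length - 1 + 1 = c.length), Walk.getVert_zero,
        Walk.getVert_length]
    · rw [if_neg (by omega), (by omega : x - 1 + 1 = x)]
  intro a b ha hb hab
  have := hnd (if a = 0 then c.length - 1 else a - 1)
    (List.mem_range.2 (by split <;> omega))
    (if b = 0 then c.length - 1 else b - 1)
    (List.mem_range.2 (by split <;> omega))
    (by rw [← key a ha, ← key b hb, hab])
  split at this <;> split at this <;> omega

lemma cycle_index (G : SimpleGraph V) {v0 : V} {c : G.Walk v0 v0}
    (hc : c.IsCycle) {k : ℕ} (hck : c.length = k) (hk : 3 ≤ k) :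
    ∃ v : ZMod k → V, Function.Injective v ∧ (∀ m, G.Adj (v m) (v (m + 1))) ∧
      (∀ m, v m ∈ c.support) ∧ (∀ x ∈ c.support, ∃ m, v m = x) := by
  haveI : NeZero k := ⟨by omega⟩
  have hvlt : ∀ m : ZMod k, m.val < k := fun m => ZMod.val_lt m
  refine ⟨fun m => c.getVert m.val, ?_, ?_, ?_, ?_⟩
  · intro a b hab
    have := cycle_getVert_injOn G hc a.val b.val (by rw [hck]; exact hvlt a)
      (by rw [hck]; exact hvlt b) hab
    exact ZMod.val_injective k this
  · intro m
    have hval : (m + 1).val = (m.val + 1) % k := by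
      haveI : Fact (1 < k) := ⟨by omega⟩
      rw [ZMod.val_add, ZMod.val_one]
    show G.Adj (c.getVert m.val) (c.getVert (m + 1).val)
    rcases Nat.lt_or_ge (m.val + 1) k with h | h
    · rw [hval, Nat.mod_eq_of_lt h]
      exact c.adj_getVert_succ (by omega)
    · have hmk : m.val + 1 = k := by have := hvlt m; omega
      have h0 : (m + 1).val = 0 := by rw [hval, hmk, Nat.mod_self]
      rw [h0, Walk.getVert_zero]
      have h2 := c.adj_getVert_succ (i := c.length - 1) (by rw [hck]; omega)
      rw [(by rw [hck]; omega : c.length - 1 + 1 = c.length), Walk.getVert_length] at h2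
      rw [(by rw [hck]; omega : m.val = c.length - 1)]
      exact h2
  · intro m
    exact Walk.mem_support_iff_exists_getVert.2 ⟨m.val, rfl, by rw [hck]; exact (hvlt m).le⟩
  · intro x hx
    obtain ⟨n, hn, hnle⟩ := Walk.mem_support_iff_exists_getVert.1 hx
    refine ⟨(n : ZMod k), ?_⟩
    show c.getVert ((n : ZMod k)).val = x
    rw [ZMod.val_natCast]
    rcases Nat.lt_or_ge n k with h | h
    · rw [Nat.mod_eq_of_lt h, hn]
    · have : n = k := by rw [hck] at hnle; omega
      subst this
      rw [Nat.mod_self, Walk.getVert_zero, ← hn, ← hck, Walk.getVert_length]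


end PottedHelpers

open SimpleGraph in
theorem potted_component_split {V : Type*} [Fintype V] (G : SimpleGraph V) (n k r : ℕ)
    (hn : Fintype.card V = n)
    (hconn : G.Connected) (huni : G.edgeSet.ncard = Nat.card V)
    (v0 : V) (c : G.Walk v0 v0) (hc : c.IsCycle) (hck : c.length = k)
    (hdeg : ∃! u, u ∈ c.support ∧ 2 < (G.neighborSet u).ncard)
    (T : Fin r → Set V)
    (hT : ∀ i, IsCompOf G {x | x ∈ c.support}ᶜ (T i))
    (hTinj : Function.Injective T)
    (hcover : (⋃ i, T i) = {x | x ∈ c.support}ᶜ) :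
    ∀ i : Fin r,
      dissNum G = dissNumOn G (T i) + dissNumOn G (T i)ᶜ ∧
      (∀ s : Finset V, IsMaxDissoc G s →
        IsMaxDissocOn G (T i) (s.filter (· ∈ T i)) ∧
        IsMaxDissocOn G (T i)ᶜ (s.filter (· ∉ T i))) ∧
      numMaxDissoc G ≤ numMaxDissocOn G (T i) * numMaxDissocOn G (T i)ᶜ := by
  intro i
  obtain ⟨u, ⟨hus, hudeg⟩, huniq⟩ := hdeg
  have hk3 : 3 ≤ k := hck ▸ hc.three_le_length
  haveI : NeZero k := ⟨by omega⟩
  set Csup : Set V := {x | x ∈ c.support} with hCsupdef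
  obtain ⟨v, hvinj, hvadj, hvmem, hvsurj⟩ := cycle_index G hc hck hk3
  obtain ⟨m0, hm0⟩ := hvsurj u hus
  -- basic ZMod facts
  have hsub_ne : ∀ m : ZMod k, m - 1 ≠ m + 1 := by
    intro m h
    have h2 : m + 2 = m := by linear_combination -h
    have h20 : (2 : ZMod k) = 0 := by
      have := h2
      rwa [add_eq_left] at this
    have h2' : ((2 : ℕ) : ZMod k) = 0 := by exact_mod_cast h20
    rw [ZMod.natCast_eq_zero_iff] at h2'
    have := Nat.le_of_dvd (by omega) h2'
    omega
  -- degree ≤ 2 for support vertices other than u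
  have hdeg2 : ∀ w, w ∈ Csup → w ≠ u → (G.neighborSet w).ncard ≤ 2 := by
    intro w hw hne
    by_contra h
    exact hne (huniq w ⟨hw, by omega⟩)
  -- neighbor sets on the cycle
  have hnbrs : ∀ m : ZMod k, m ≠ m0 → G.neighborSet (v m) = {v (m - 1), v (m + 1)} := by
    intro m hm
    have hadj1 : G.Adj (v m) (v (m - 1)) := by
      have := (hvadj (m - 1)).symm
      rwa [sub_add_cancel] at this
    have hsub : ({v (m - 1), v (m + 1)} : Set V) ⊆ G.neighborSet (v m) := by
      rintro x (rfl | rfl)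
      · exact hadj1
      · exact hvadj m
    have hcard2 : ({v (m - 1), v (m + 1)} : Set V).ncard = 2 :=
      Set.ncard_pair (fun h => hsub_ne m (hvinj h))
    have hle2 : (G.neighborSet (v m)).ncard ≤ 2 :=
      hdeg2 (v m) (hvmem m) (fun h => hm (hvinj (h.trans hm0.symm)))
    exact (Set.eq_of_subset_of_ncard_le hsub (by rw [hcard2]; exact hle2)
      (Set.toFinite _)).symm
  have hrange : ∀ m : ZMod k, v m ∈ Csup := hvmem
  have hTA : ↑(T i) ⊆ Csupᶜ := (hT i).1
  have huCsup : u ∈ Csup := hus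
  have huTi : u ∉ T i := fun h => hTA h huCsup
  -- cross edges from T i go to u
  have hcross : ∀ x ∈ T i, ∀ y, G.Adj x y → y ∉ T i → y = u := by
    intro x hxi y hxy hyni
    by_cases hyc : y ∈ Csup
    · obtain ⟨m, rfl⟩ := hvsurj y hyc
      by_cases hm : m = m0
      · rw [hm, hm0]
      · exfalso
        have hxmem : x ∈ G.neighborSet (v m) := hxy.symm
        rw [hnbrs m hm] at hxmem
        rcases hxmem with h | h <;>
          exact (hTA hxi) (h ▸ hrange _)
    · have hyA : y ∈ (⋃ j, T j) := by rw [hcover]; exact hyc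
      obtain ⟨j, hyj⟩ := Set.mem_iUnion.1 hyA
      exfalso
      have h1 : (G.induce (T i ∪ {x, y})).Connected :=
        induce_union_connected (hT i).2.2.1.preconnected (induce_pair_connected_of_adj hxy).preconnected
          ⟨x, hxi, by simp⟩
      have h2 : (G.induce ((T i ∪ {x, y}) ∪ T j)).Connected :=
        induce_union_connected h1.preconnected (hT j).2.2.1.preconnected ⟨y, Or.inr (by simp), hyj⟩
      have h3 : (T i ∪ {x, y}) ∪ T j = T i := by
        refine (hT i).2.2.2 _ (fun z hz => Or.inl (Or.inl hz)) ?_ h2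
        rintro z ((hz | hz) | hz)
        · exact hTA hz
        · rcases hz with rfl | rfl
          · exact hTA hxi
          · exact hyc
        · exact (hT j).1 hz
      exact hyni (h3 ▸ (Or.inl (Or.inr (Or.inr rfl)) : y ∈ (T i ∪ {x, y}) ∪ T j))
  -- existence of a maximum dissociation set of G[(T i)ᶜ] avoiding u
  have hadjm1 : ∀ m : ZMod k, G.Adj (v m) (v (m - 1)) := by
    intro m
    have := (hvadj (m - 1)).symm
    rwa [sub_add_cancel] at this
  have hD2 : ∃ D2 : Finset V, IsMaxDissocOn G (T i)ᶜ D2 ∧ u ∉ D2 := by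
    obtain ⟨F, hFsub, hFdis, hFcard⟩ := exists_maxDissocOn G (T i)ᶜ
    by_cases huF : u ∈ F
    · set S : Finset V := F.filter (· ∈ Csup) with hSdef
      set R : Finset V := F.filter (· ∉ Csup) with hRdef
      set I : Finset (ZMod k) := Finset.univ.filter (fun m => v m ∈ S) with hIdef
      have hSF : ∀ x ∈ S, x ∈ F := fun x hx => (Finset.mem_filter.1 hx).1
      have hSI : ∀ x ∈ S, ∃ m ∈ I, v m = x := by
        intro x hx
        have hxc : x ∈ Csup := (Finset.mem_filter.1 hx).2
        obtain ⟨m, rfl⟩ := hvsurj x hxc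
        exact ⟨m, Finset.mem_filter.2 ⟨Finset.mem_univ _, hx⟩, rfl⟩
      have hScard : S.card = I.card := by
        have hSim : S = I.image v := by
          ext x
          constructor
          · intro hx
            obtain ⟨m, hmI, rfl⟩ := hSI x hx
            exact Finset.mem_image.2 ⟨m, hmI, rfl⟩
          · intro hx
            obtain ⟨m, hmI, rfl⟩ := Finset.mem_image.1 hx
            exact (Finset.mem_filter.1 hmI).2
        rw [hSim, Finset.card_image_of_injective _ hvinj]
      have hC : ∀ m ∈ I, ¬(m - 1 ∈ I ∧ m + 1 ∈ I) := by
        rintro m hmI ⟨h1, h2⟩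
        have hmS : v m ∈ S := (Finset.mem_filter.1 hmI).2
        have h1S : v (m - 1) ∈ S := (Finset.mem_filter.1 h1).2
        have h2S : v (m + 1) ∈ S := (Finset.mem_filter.1 h2).2
        have h2le := two_le_nbrCount G (hSF _ h1S) (hSF _ h2S)
          (fun h => hsub_ne m (hvinj h)) (hadjm1 m) (hvadj m)
        have := hFdis (v m) (hSF _ hmS)
        omega
      have hInotall : ∃ j0 : ZMod k, j0 ∉ I := by
        by_contra h
        push_neg at h
        exact hC 0 (h 0) ⟨h _, h _⟩
      obtain ⟨j0, hj0⟩ := hInotall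
      set d : ZMod k := m0 - j0 with hddef
      set I' : Finset (ZMod k) := I.image (· + d) with hI'def
      have hI'card : I'.card = I.card :=
        Finset.card_image_of_injective _ (add_left_injective d)
      have hm0I' : m0 ∉ I' := by
        intro h
        obtain ⟨a, haI, ha⟩ := Finset.mem_image.1 h
        have haj : a = j0 := by
          have ha' : a + (m0 - j0) = m0 := ha
          linear_combination ha'
        exact hj0 (haj ▸ haI)
      have hC' : ∀ m ∈ I', ¬(m - 1 ∈ I' ∧ m + 1 ∈ I') := by
        rintro m hm ⟨h1, h2⟩
        obtain ⟨a, haI, rfl⟩ := Finset.mem_image.1 hm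
        obtain ⟨b1, hb1, hb1e⟩ := Finset.mem_image.1 h1
        obtain ⟨b2, hb2, hb2e⟩ := Finset.mem_image.1 h2
        have e1 : b1 = a - 1 := by
          have : b1 + d = a + d - 1 := hb1e
          linear_combination this
        have e2 : b2 = a + 1 := by
          have : b2 + d = a + d + 1 := hb2e
          linear_combination this
        exact hC a haI ⟨e1 ▸ hb1, e2 ▸ hb2⟩
      set S' : Finset V := I'.image v with hS'def
      have hS'mem : ∀ m : ZMod k, v m ∈ S' ↔ m ∈ I' := by
        intro m
        constructor
        · intro h
          obtain ⟨b, hb, hbe⟩ := Finset.mem_image.1 h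
          rwa [← hvinj hbe]
        · intro h
          exact Finset.mem_image.2 ⟨m, h, rfl⟩
      have hS'Csup : ∀ x ∈ S', x ∈ Csup := by
        intro x hx
        obtain ⟨b, -, rfl⟩ := Finset.mem_image.1 hx
        exact hrange b
      set F' : Finset V := S' ∪ R with hF'def
      have hRnc : ∀ x ∈ R, x ∉ Csup := fun x hx => (Finset.mem_filter.1 hx).2
      have hRF : ∀ x ∈ R, x ∈ F := fun x hx => (Finset.mem_filter.1 hx).1
      have hdisjSR : Disjoint S' R := by
        rw [Finset.disjoint_left]
        intro x hx hxR
        exact hRnc x hxR (hS'Csup x hx)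
      have hF'card : F'.card = F.card := by
        rw [hF'def, Finset.card_union_of_disjoint hdisjSR, hS'def,
          Finset.card_image_of_injective _ hvinj, hI'card, ← hScard]
        exact Finset.card_filter_add_card_filter_not (p := (· ∈ Csup))
      have hmemF' : ∀ mm : ZMod k, v mm ∈ F' → mm ∈ I' := by
        intro mm hmm
        rcases Finset.mem_union.1 hmm with h | h
        · exact (hS'mem mm).1 h
        · exact absurd (hrange mm) (hRnc _ h)
      have huF' : u ∉ F' := by
        intro h
        rcases Finset.mem_union.1 h with h | h
        · rw [← hm0, hS'mem] at h
          exact hm0I' h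
        · exact hRnc u h huCsup
      have hF'sub : ↑F' ⊆ (T i)ᶜ := by
        intro x hx
        rcases Finset.mem_union.1 (Finset.mem_coe.1 hx) with h | h
        · exact fun hxT => hTA hxT (hS'Csup x h)
        · exact hFsub (Finset.mem_coe.2 (hRF x h))
      have hF'dis : IsDissoc G F' := by
        intro w hw
        rcases Finset.mem_union.1 hw with hwS | hwR
        · obtain ⟨m, hmI', rfl⟩ := Finset.mem_image.1 hwS
          have hmne : m ≠ m0 := fun h => hm0I' (h ▸ hmI')
          have hsubn : {z ∈ (↑F' : Set V) | G.Adj (v m) z} ⊆ ({v (m - 1), v (m + 1)} : Set V) := by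
            rintro z ⟨hz1, hz2⟩
            have hzn : z ∈ G.neighborSet (v m) := hz2
            rwa [hnbrs m hmne] at hzn
          have hnotboth : ¬(v (m - 1) ∈ F' ∧ v (m + 1) ∈ F') := by
            rintro ⟨h1, h2⟩
            exact hC' m hmI' ⟨hmemF' _ h1, hmemF' _ h2⟩
          show nbrCount G F' (v m) ≤ 1
          by_cases h1 : v (m - 1) ∈ F'
          · refine ncard_le_one_of_subset_singleton (a := v (m - 1)) ?_
            rintro z hz
            rcases hsubn hz with h | h
            · exact h
            · exact absurd ⟨h1, by rw [← h]; exact Finset.mem_coe.1 hz.1⟩ hnotboth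
          · refine ncard_le_one_of_subset_singleton (a := v (m + 1)) ?_
            rintro z hz
            rcases hsubn hz with h | h
            · exact absurd (by rw [← h]; exact Finset.mem_coe.1 hz.1) h1
            · exact h
        · have hsubn : {z ∈ (↑F' : Set V) | G.Adj w z} ⊆ {z ∈ (↑F : Set V) | G.Adj w z} := by
            rintro z ⟨hz1, hz2⟩
            refine ⟨?_, hz2⟩
            rcases Finset.mem_union.1 (Finset.mem_coe.1 hz1) with h | h
            · exfalso
              obtain ⟨m, hmI', rfl⟩ := Finset.mem_image.1 h
              have hmne : m ≠ m0 := fun hh => hm0I' (hh ▸ hmI')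
              have hwn : w ∈ G.neighborSet (v m) := hz2.symm
              rw [hnbrs m hmne] at hwn
              rcases hwn with h' | h' <;> exact hRnc w hwR (h' ▸ hrange _)
            · exact Finset.mem_coe.2 (hRF z h)
          calc nbrCount G F' w ≤ nbrCount G F w :=
                Set.ncard_le_ncard hsubn (nbrSet_finite G F w)
            _ ≤ 1 := hFdis w (hRF w hwR)
      exact ⟨F', ⟨hF'sub, hF'dis, by rw [hF'card, hFcard]⟩, huF'⟩
    · exact ⟨F, ⟨hFsub, hFdis, hFcard⟩, huF⟩
  have hge : dissNumOn G (T i) + dissNumOn G (T i)ᶜ ≤ dissNum G := by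
    obtain ⟨D1, hD1sub, hD1dis, hD1card⟩ := exists_maxDissocOn G (T i)
    obtain ⟨D2, ⟨hD2sub, hD2dis, hD2card⟩, huD2⟩ := hD2
    have hdisj : Disjoint D1 D2 := by
      rw [Finset.disjoint_left]
      intro a ha ha2
      exact (hD2sub (Finset.mem_coe.2 ha2)) (hD1sub (Finset.mem_coe.2 ha))
    have hDdis : IsDissoc G (D1 ∪ D2) := by
      intro w hw
      rcases Finset.mem_union.1 hw with h | h
      · have hsubn : {z ∈ (↑(D1 ∪ D2) : Set V) | G.Adj w z} ⊆
            {z ∈ (↑D1 : Set V) | G.Adj w z} := by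
          rintro z ⟨hz1, hz2⟩
          refine ⟨?_, hz2⟩
          rcases Finset.mem_union.1 (Finset.mem_coe.1 hz1) with hz | hz
          · exact Finset.mem_coe.2 hz
          · exfalso
            have hzni : z ∉ T i := hD2sub (Finset.mem_coe.2 hz)
            have := hcross w (hD1sub (Finset.mem_coe.2 h)) z hz2 hzni
            exact huD2 (this ▸ hz)
        calc nbrCount G (D1 ∪ D2) w ≤ nbrCount G D1 w :=
              Set.ncard_le_ncard hsubn (nbrSet_finite G D1 w)
          _ ≤ 1 := hD1dis w h
      · have hsubn : {z ∈ (↑(D1 ∪ D2) : Set V) | G.Adj w z} ⊆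
            {z ∈ (↑D2 : Set V) | G.Adj w z} := by
          rintro z ⟨hz1, hz2⟩
          refine ⟨?_, hz2⟩
          rcases Finset.mem_union.1 (Finset.mem_coe.1 hz1) with hz | hz
          · exfalso
            have hwni : w ∉ T i := hD2sub (Finset.mem_coe.2 h)
            have := hcross z (hD1sub (Finset.mem_coe.2 hz)) w hz2.symm hwni
            exact huD2 (this ▸ h)
          · exact Finset.mem_coe.2 hz
        calc nbrCount G (D1 ∪ D2) w ≤ nbrCount G D2 w :=
              Set.ncard_le_ncard hsubn (nbrSet_finite G D2 w)
          _ ≤ 1 := hD2dis w h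
    calc dissNumOn G (T i) + dissNumOn G (T i)ᶜ = (D1 ∪ D2).card := by
          rw [Finset.card_union_of_disjoint hdisj, hD1card, hD2card]
      _ ≤ dissNumOn G Set.univ :=
          card_le_dissNumOn G (fun x _ => Set.mem_univ x) hDdis
  have hle : dissNum G ≤ dissNumOn G (T i) + dissNumOn G (T i)ᶜ := by
    obtain ⟨F, hFsub, hFdis, hFcard⟩ := exists_maxDissocOn G Set.univ
    have h1 : (F.filter (· ∈ T i)).card ≤ dissNumOn G (T i) := by
      refine card_le_dissNumOn G ?_ (isDissoc_subset G (Finset.filter_subset _ _) hFdis)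
      intro x hx
      exact (Finset.mem_filter.1 (Finset.mem_coe.1 hx)).2
    have h2 : (F.filter (· ∉ T i)).card ≤ dissNumOn G (T i)ᶜ := by
      refine card_le_dissNumOn G ?_ (isDissoc_subset G (Finset.filter_subset _ _) hFdis)
      intro x hx
      exact (Finset.mem_filter.1 (Finset.mem_coe.1 hx)).2
    have hsum : (F.filter (· ∈ T i)).card + (F.filter (· ∉ T i)).card = F.card :=
      Finset.card_filter_add_card_filter_not (p := (· ∈ T i))
    show dissNumOn G Set.univ ≤ _
    rw [← hFcard, ← hsum]
    omega
  have conj1 : dissNum G = dissNumOn G (T i) + dissNumOn G (T i)ᶜ := le_antisymm hle hge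
  have conj2 : ∀ s : Finset V, IsMaxDissoc G s →
      IsMaxDissocOn G (T i) (s.filter (· ∈ T i)) ∧
      IsMaxDissocOn G (T i)ᶜ (s.filter (· ∉ T i)) := by
    intro s hs
    obtain ⟨hssub, hsdis, hscard⟩ := hs
    have h1sub : ↑(s.filter (· ∈ T i)) ⊆ T i := by
      intro x hx
      exact (Finset.mem_filter.1 (Finset.mem_coe.1 hx)).2
    have h2sub : ↑(s.filter (· ∉ T i)) ⊆ (T i)ᶜ := by
      intro x hx
      exact (Finset.mem_filter.1 (Finset.mem_coe.1 hx)).2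
    have h1dis : IsDissoc G (s.filter (· ∈ T i)) :=
      isDissoc_subset G (Finset.filter_subset _ _) hsdis
    have h2dis : IsDissoc G (s.filter (· ∉ T i)) :=
      isDissoc_subset G (Finset.filter_subset _ _) hsdis
    have h1le : (s.filter (· ∈ T i)).card ≤ dissNumOn G (T i) :=
      card_le_dissNumOn G h1sub h1dis
    have h2le : (s.filter (· ∉ T i)).card ≤ dissNumOn G (T i)ᶜ :=
      card_le_dissNumOn G h2sub h2dis
    have hsum : (s.filter (· ∈ T i)).card + (s.filter (· ∉ T i)).card = s.card :=
      Finset.card_filter_add_card_filter_not (p := (· ∈ T i))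
    have htot : s.card = dissNumOn G (T i) + dissNumOn G (T i)ᶜ := by
      rw [hscard]; exact conj1
    exact ⟨⟨h1sub, h1dis, by omega⟩, ⟨h2sub, h2dis, by omega⟩⟩
  refine ⟨conj1, conj2, ?_⟩
  have key : ∀ s : Finset V, s.filter (· ∈ T i) ∪ s.filter (· ∉ T i) = s := by
    intro s
    ext x
    simp only [Finset.mem_union, Finset.mem_filter]
    tauto
  let f : {s : Finset V // IsMaxDissocOn G Set.univ s} →
      {s : Finset V // IsMaxDissocOn G (T i) s} × {s : Finset V // IsMaxDissocOn G (T i)ᶜ s} :=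
    fun s => ⟨⟨_, (conj2 s.1 s.2).1⟩, ⟨_, (conj2 s.1 s.2).2⟩⟩
  have hf : Function.Injective f := by
    rintro ⟨s, hs⟩ ⟨t, ht⟩ h
    simp only [f, Prod.mk.injEq, Subtype.mk.injEq] at h
    apply Subtype.ext
    show s = t
    rw [← key s, ← key t, h.1, h.2]
  calc numMaxDissoc G = Nat.card {s : Finset V // IsMaxDissocOn G Set.univ s} := rfl
    _ ≤ Nat.card ({s : Finset V // IsMaxDissocOn G (T i) s} ×
          {s : Finset V // IsMaxDissocOn G (T i)ᶜ s}) :=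
        Nat.card_le_card_of_injective f hf
    _ = _ := Nat.card_prod _ _
end

section
/- Define f(x) = 3^{x−1} + x + 1 and g(x) = 3^{x−1}. Let m, l, k₁, …, k_i be positive integers with l ≥ 5, m ≥ l+3, m − l ≡ 0 (mod 3), i ≥ 2 and k₁ + ⋯ + k_i = (m−l)/3. Then (1/3)(l+1)·∏_{j=1}^{i} f(k_j) + (1/3)(2l−1)·∏_{j=1}^{i} g(k_j) + Σ_{r=1}^{i} ∏_{j ≠ r} g(k_j) ≤ (1/3)(l+1)·3^{(m−l)/3} + (m+l−1)/3, with equality if and only if i = (m−l)/3 (i.e., k₁ = ⋯ = k_i = 1). -/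
/-- `f(x) = 3^{x-1} + x + 1`. -/
noncomputable def f (x : ℕ) : ℝ := 3 ^ (x - 1) + x + 1

/-- `g(x) = 3^{x-1}`. -/
noncomputable def g (x : ℕ) : ℝ := 3 ^ (x - 1)

lemma nat1 : ∀ s : ℕ, s + 2 ≤ 2 * 3 ^ s := by
  intro s
  induction s with
  | zero => simp
  | succ n ih =>
    have h1 : 1 ≤ 3 ^ n := Nat.one_le_pow _ _ (by norm_num)
    rw [pow_succ]
    omega

lemma nat2 : ∀ s : ℕ, s + 3 ≤ 3 ^ (s + 1) := by
  intro s
  induction s with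
  | zero => simp
  | succ n ih =>
    have h1 : 1 ≤ 3 ^ (n + 1) := Nat.one_le_pow _ _ (by norm_num)
    rw [pow_succ]
    omega

lemma f_le_pow (x : ℕ) (hx : 1 ≤ x) : f x ≤ 3 ^ x := by
  obtain ⟨s, rfl⟩ : ∃ s, x = s + 1 := ⟨x - 1, by omega⟩
  have h := nat1 s
  have h' : (s : ℝ) + 2 ≤ 2 * 3 ^ s := by exact_mod_cast h
  simp only [f, Nat.add_sub_cancel]
  push_cast
  rw [pow_succ]
  nlinarith [pow_pos (by norm_num : (0:ℝ) < 3) s]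

lemma f_le_two_pow (x : ℕ) (hx : 2 ≤ x) : f x ≤ 2 * 3 ^ (x - 1) := by
  obtain ⟨s, rfl⟩ : ∃ s, x = s + 2 := ⟨x - 2, by omega⟩
  have h := nat2 s
  have h' : (s : ℝ) + 3 ≤ 3 ^ (s + 1) := by exact_mod_cast h
  have he : s + 2 - 1 = s + 1 := by omega
  simp only [f, he]
  push_cast
  nlinarith [pow_pos (by norm_num : (0:ℝ) < 3) (s + 1)]

lemma key (l i : ℕ) (hl : 5 ≤ l) (hi : 2 ≤ i) :
    (2 * (l : ℝ) - 1) / 3 + i < ((l : ℝ) + 1) * 3 ^ (i - 2) := by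
  have hlr : (5 : ℝ) ≤ l := by exact_mod_cast hl
  induction i, hi using Nat.le_induction with
  | base =>
    norm_num
    linarith
  | succ n hn ih =>
    have he : n + 1 - 2 = (n - 2) + 1 := by omega
    rw [he, pow_succ]
    have hnr : (2 : ℝ) ≤ n := by exact_mod_cast hn
    have hA : (1:ℝ) ≤ 3 ^ (n - 2) := one_le_pow₀ (by norm_num)
    push_cast
    nlinarith [ih]

theorem lem_2_9_ii (m l i : ℕ) (hl : 5 ≤ l) (hm : l + 3 ≤ m) (hmod : (m - l) % 3 = 0)
    (hi : 2 ≤ i) (k : Fin i → ℕ) (hk : ∀ j, 1 ≤ k j)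
    (hsum : ∑ j, k j = (m - l) / 3) :
    ((l : ℝ) + 1) / 3 * ∏ j, f (k j) + (2 * (l : ℝ) - 1) / 3 * ∏ j, g (k j)
        + ∑ r, ∏ j ∈ Finset.univ.erase r, g (k j)
      ≤ ((l : ℝ) + 1) / 3 * 3 ^ ((m - l) / 3) + ((m : ℝ) + l - 1) / 3 ∧
    (((l : ℝ) + 1) / 3 * ∏ j, f (k j) + (2 * (l : ℝ) - 1) / 3 * ∏ j, g (k j)
        + ∑ r, ∏ j ∈ Finset.univ.erase r, g (k j)
      = ((l : ℝ) + 1) / 3 * 3 ^ ((m - l) / 3) + ((m : ℝ) + l - 1) / 3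
      ↔ i = (m - l) / 3) := by
  set n := (m - l) / 3 with hn
  have hmn : m = l + 3 * n := by omega
  have hsum' : ∑ j, k j = n := hsum
  set t := ∑ j, (k j - 1) with ht
  have hti : t + i = n := by
    have h1 : ∀ j ∈ Finset.univ, (k j - 1) + 1 = k j := fun j _ => Nat.sub_add_cancel (hk j)
    calc t + i = ∑ j : Fin i, ((k j - 1) + 1) := by
          rw [Finset.sum_add_distrib, Finset.sum_const, Finset.card_univ, Fintype.card_fin,
            smul_eq_mul, mul_one]
      _ = ∑ j, k j := Finset.sum_congr rfl h1
      _ = n := hsum'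
  have hprodg : ∏ j, g (k j) = (3:ℝ) ^ t := by
    simp only [g]
    exact Finset.prod_pow_eq_pow_sum _ _ _
  have hRHS : ((m:ℝ) + l - 1) / 3 = (2 * (l:ℝ) - 1) / 3 + n := by
    have hc : (m:ℝ) = l + 3 * n := by exact_mod_cast hmn
    rw [hc]; ring
  by_cases hone : ∀ j, k j = 1
  · -- equality case
    have hin : i = n := by
      rw [← hsum']
      simp [hone]
    have hf1 : f 1 = 3 := by norm_num [f]
    have hg1 : g 1 = 1 := by norm_num [g]
    have hP : ∏ j, f (k j) = (3:ℝ) ^ i := by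
      simp [hone, hf1]
    have hQ : ∏ j, g (k j) = 1 := by
      simp [hone, hg1]
    have hS : ∑ r : Fin i, ∏ j ∈ Finset.univ.erase r, g (k j) = (i : ℝ) := by
      have : ∀ r : Fin i, ∏ j ∈ Finset.univ.erase r, g (k j) = 1 := by
        intro r
        apply Finset.prod_eq_one
        intro j _
        rw [hone j, hg1]
      rw [Finset.sum_congr rfl (fun r _ => this r)]
      simp
    have heq : ((l : ℝ) + 1) / 3 * ∏ j, f (k j) + (2 * (l : ℝ) - 1) / 3 * ∏ j, g (k j)
        + ∑ r, ∏ j ∈ Finset.univ.erase r, g (k j)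
        = ((l : ℝ) + 1) / 3 * 3 ^ n + ((m : ℝ) + l - 1) / 3 := by
      rw [hP, hQ, hS, hRHS, ← hin]
      ring
    exact ⟨le_of_eq heq, by constructor <;> intro _ <;> [exact hin; exact heq]⟩
  · -- strict inequality case
    push_neg at hone
    obtain ⟨j0, hj0⟩ := hone
    have hj02 : 2 ≤ k j0 := by have := hk j0; omega
    have ht1 : 1 ≤ t := by
      have h1 : k j0 - 1 ≤ ∑ j, (k j - 1) :=
        Finset.single_le_sum (f := fun j => k j - 1) (fun j _ => Nat.zero_le _)
          (Finset.mem_univ j0)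
      omega
    have hin : i ≠ n := by omega
    have hfpos : ∀ x : ℕ, 0 < f x := by
      intro x
      have : (0:ℝ) < 3 ^ (x - 1) := by positivity
      simp only [f]
      positivity
    have hgpos : ∀ x : ℕ, 0 < g x := by
      intro x; simp only [g]; positivity
    -- product of f bound
    have hP : ∏ j, f (k j) ≤ 2 * (3:ℝ) ^ (n - 1) := by
      rw [← Finset.mul_prod_erase Finset.univ _ (Finset.mem_univ j0)]
      have h1 : f (k j0) ≤ 2 * (3:ℝ) ^ (k j0 - 1) := f_le_two_pow _ hj02
      have h2 : ∏ j ∈ Finset.univ.erase j0, f (k j)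
          ≤ ∏ j ∈ Finset.univ.erase j0, (3:ℝ) ^ (k j) := by
        apply Finset.prod_le_prod
        · intro j _; exact le_of_lt (hfpos _)
        · intro j _; exact f_le_pow _ (hk j)
      have h3 : ∏ j ∈ Finset.univ.erase j0, (3:ℝ) ^ (k j)
          = (3:ℝ) ^ (∑ j ∈ Finset.univ.erase j0, k j) :=
        Finset.prod_pow_eq_pow_sum _ _ _
      have hse : k j0 + ∑ j ∈ Finset.univ.erase j0, k j = n := by
        rw [← hsum', Finset.add_sum_erase Finset.univ k (Finset.mem_univ j0)]
      have hexp : (k j0 - 1) + ∑ j ∈ Finset.univ.erase j0, k j = n - 1 := by omega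
      calc f (k j0) * ∏ j ∈ Finset.univ.erase j0, f (k j)
          ≤ (2 * (3:ℝ) ^ (k j0 - 1)) * ∏ j ∈ Finset.univ.erase j0, (3:ℝ) ^ (k j) := by
            apply mul_le_mul h1 h2 (Finset.prod_nonneg (fun j _ => le_of_lt (hfpos _)))
            positivity
        _ = 2 * (3:ℝ) ^ (n - 1) := by
            rw [h3, mul_assoc, ← pow_add, hexp]
    -- sum bound
    have hS : ∑ r : Fin i, ∏ j ∈ Finset.univ.erase r, g (k j) ≤ (i : ℝ) * 3 ^ t := by
      have hterm : ∀ r : Fin i, ∏ j ∈ Finset.univ.erase r, g (k j) ≤ (3:ℝ) ^ t := by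
        intro r
        have h1 : ∏ j ∈ Finset.univ.erase r, g (k j)
            = (3:ℝ) ^ (∑ j ∈ Finset.univ.erase r, (k j - 1)) := by
          simp only [g]
          exact Finset.prod_pow_eq_pow_sum _ _ _
        have h2 : ∑ j ∈ Finset.univ.erase r, (k j - 1) ≤ t :=
          Finset.sum_le_sum_of_subset (Finset.erase_subset _ _)
        rw [h1]
        exact pow_le_pow_right₀ (by norm_num) h2
      calc ∑ r : Fin i, ∏ j ∈ Finset.univ.erase r, g (k j)
          ≤ ∑ _r : Fin i, (3:ℝ) ^ t := Finset.sum_le_sum (fun r _ => hterm r)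
        _ = (i : ℝ) * 3 ^ t := by
            rw [Finset.sum_const, Finset.card_univ, Fintype.card_fin, nsmul_eq_mul]
    -- key inequality
    have hkey := key l i hl hi
    have hlr : (5 : ℝ) ≤ l := by exact_mod_cast hl
    have hBpos : (0:ℝ) < 3 ^ t := by positivity
    have hkeyB : ((2 * (l:ℝ) - 1) / 3 + i) * 3 ^ t < ((l:ℝ) + 1) * 3 ^ (i - 2) * 3 ^ t := by
      apply mul_lt_mul_of_pos_right hkey hBpos
    have hexp1 : n - 1 = (i - 2) + t + 1 := by omega
    have hexp2 : n = (i - 2) + t + 2 := by omega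
    have h3n1 : (3:ℝ) ^ (n - 1) = 3 ^ (i - 2) * 3 ^ t * 3 := by
      rw [hexp1, pow_succ, pow_add]
    have h3n : (3:ℝ) ^ n = 3 ^ (i - 2) * 3 ^ t * 9 := by
      rw [hexp2, pow_add, pow_add]
      ring
    have hnr : (0:ℝ) ≤ n := Nat.cast_nonneg n
    have hProdgPos : (0:ℝ) < ∏ j, g (k j) := Finset.prod_pos (fun j _ => hgpos _)
    have hlt : ((l : ℝ) + 1) / 3 * ∏ j, f (k j) + (2 * (l : ℝ) - 1) / 3 * ∏ j, g (k j)
        + ∑ r, ∏ j ∈ Finset.univ.erase r, g (k j)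
        < ((l : ℝ) + 1) / 3 * 3 ^ n + ((m : ℝ) + l - 1) / 3 := by
      rw [hprodg, hRHS, h3n]
      have hc1 : ((l : ℝ) + 1) / 3 * ∏ j, f (k j) ≤ ((l : ℝ) + 1) / 3 * (2 * 3 ^ (n - 1)) := by
        apply mul_le_mul_of_nonneg_left hP
        linarith
      rw [h3n1] at hc1
      nlinarith [hkeyB, hS, hc1]
    exact ⟨le_of_lt hlt, by
      constructor
      · intro h; exact absurd h (ne_of_lt hlt)
      · intro h; exact absurd h hin⟩
end
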